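/- Let q > 5 be a prime power and n ≥ 2. Let T = {t ∈ (𝔽_q^×)^n : t_1·t_2⋯t_n = 1} (the 𝔽_q-points of the diagonal torus of SL_n). For each t ∈ T define the vector v_t ∈ 𝔽_q^{S}, indexed by S = {∗} ⊔ {(i,j) : 1 ≤ i, j ≤ n, i ≠ j}, by v_t(∗) = 1 and v_t(i,j) = t_i · t_j^{−1}. Then the 𝔽_q-linear span of {v_t : t ∈ T} is all of 𝔽_q^{S}. (This is the root-values spanning lemma, in its type A_{n-1} instance, where the roots of SL_n relative to the diagonal torus are t ↦ t_i t_j^{−1} for i ≠ j.) -/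

import Mathlib

/-!
The coordinates of `v_t` are the values at `t` of the characters `1` and `t ↦ t_i / t_j` of the
torus. Distinct characters are linearly independent (Artin), and a linearly independent finite
family of functions has evaluation vectors spanning the coordinate space, since a functional
vanishing on all of them is a linear relation between the functions. The characters are distinct
because `q - 1 > 4`: their exponent vectors have entries in `{-1, 0, 1}` and sum `0`, and the torus
element with `g` in slot `k` and `g⁻¹` in slot `l`, for a generator `g` of `𝔽_qˣ`, detects the
difference of the exponents at `k` and at `l`.
-/

open Finset

theorem span_range_eval_eq_top_of_linearIndependent {ι X K : Type*} [Field K] [Fintype ι]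
    {f : ι → X → K} (hf : LinearIndependent K f) :
    Submodule.span K (Set.range fun x i => f i x) = ⊤ := by
  classical
  by_contra hne
  obtain ⟨φ, hφ, hφspan⟩ :=
    Submodule.exists_dual_map_eq_bot_of_lt_top (lt_top_iff_ne_top.2 hne) inferInstance
  have hφ_eval (x : X) : ∑ i, φ (Pi.single i 1) • f i x = 0 := by
    have hvanish : φ (fun i => f i x) = 0 := by
      rw [← Submodule.mem_bot K, ← hφspan]
      exact Submodule.mem_map_of_mem (Submodule.subset_span ⟨x, rfl⟩)
    conv_lhs at hvanish => rw [pi_eq_sum_univ' (fun i => f i x)]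
    simpa [map_sum, mul_comm] using hvanish
  have hcoeff := Fintype.linearIndependent_iff.1 hf _ (funext fun x => by simpa using hφ_eval x)
  exact hφ (LinearMap.pi_ext' fun i => LinearMap.ext_ring (by simpa using hcoeff i))

theorem span_range_eval_eq_top_of_injective {G K ι : Type*} [MulOneClass G] [Field K] [Fintype ι]
    {χ : ι → G →* K} (hχ : Function.Injective χ) :
    Submodule.span K (Set.range fun g i => χ i g) = ⊤ :=
  span_range_eval_eq_top_of_linearIndependent ((linearIndependent_monoidHom G K).comp χ hχ)

section ProdEqOne

variable {ι G : Type*} [Fintype ι] [CommGroup G]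

variable (ι G) in
def prodEqOneSubgroup : Subgroup (ι → G) :=
  MonoidHom.ker (∏ i, Pi.evalMonoidHom (fun _ => G) i)

theorem mem_prodEqOneSubgroup {t : ι → G} : t ∈ prodEqOneSubgroup ι G ↔ ∏ i, t i = 1 := by
  simp [prodEqOneSubgroup]

theorem mulSingle_mul_mulSingle_inv_mem_prodEqOneSubgroup [DecidableEq ι] (k l : ι) (x : G) :
    Pi.mulSingle k x * Pi.mulSingle l x⁻¹ ∈ prodEqOneSubgroup ι G := by
  simp [mem_prodEqOneSubgroup, prod_mul_distrib]

def zpowProdHom (m : ι → ℤ) : (ι → G) →* G :=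
  ∏ i, (zpowGroupHom (m i)).comp (Pi.evalMonoidHom (fun _ => G) i)

theorem zpowProdHom_apply (m : ι → ℤ) (t : ι → G) : zpowProdHom m t = ∏ i, t i ^ m i := by
  simp [zpowProdHom]

theorem zpowProdHom_sub (m m' : ι → ℤ) (t : ι → G) :
    zpowProdHom (m - m') t = zpowProdHom m t / zpowProdHom m' t := by
  simp only [zpowProdHom_apply, Pi.sub_apply, zpow_sub, prod_mul_distrib, prod_inv_distrib,
    div_eq_mul_inv]

theorem zpowProdHom_single [DecidableEq ι] (i : ι) (k : ℤ) (t : ι → G) :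
    zpowProdHom (Pi.single i k) t = t i ^ k := by
  rw [zpowProdHom_apply, prod_eq_single i (fun j _ hj => by simp [hj]) (by simp)]
  simp

theorem zpowProdHom_mulSingle [DecidableEq ι] (m : ι → ℤ) (i : ι) (x : G) :
    zpowProdHom m (Pi.mulSingle i x) = x ^ m i := by
  rw [zpowProdHom_apply, prod_eq_single i (fun j _ hj => by simp [hj]) (by simp)]
  simp

theorem eq_of_zpowProdHom_eqOn_prodEqOneSubgroup {g : G} (hg : 4 < orderOf g) {m m' : ι → ℤ}
    (hm : ∀ i, |m i| ≤ 1) (hm' : ∀ i, |m' i| ≤ 1) (hsum : ∑ i, m i = ∑ i, m' i)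
    (h : ∀ t ∈ prodEqOneSubgroup ι G, zpowProdHom m t = zpowProdHom m' t) : m = m' := by
  classical
  have hdiff (k l : ι) : m k - m' k = m l - m' l := by
    rcases eq_or_ne k l with rfl | hkl
    · rfl
    have hval := h _ (mulSingle_mul_mulSingle_inv_mem_prodEqOneSubgroup k l g)
    simp only [map_mul, zpowProdHom_mulSingle, inv_zpow', ← zpow_add] at hval
    have hdvd := (zpow_eq_zpow_iff_modEq.1 hval).dvd
    have hbound : |m' k + -m' l - (m k + -m l)| < orderOf g := by
      have hk := abs_le.1 (hm k); have hl := abs_le.1 (hm l)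
      have hk' := abs_le.1 (hm' k); have hl' := abs_le.1 (hm' l)
      rw [abs_lt]; constructor <;> omega
    have hzero := Int.eq_zero_of_abs_lt_dvd hdvd hbound
    omega
  funext k
  have hzero : ∑ l, (m l - m' l) = 0 := by rw [sum_sub_distrib, hsum, sub_self]
  simp only [← hdiff k, sum_const, card_univ, nsmul_eq_mul] at hzero
  have hcard : (Fintype.card ι : ℤ) ≠ 0 := by exact_mod_cast (Fintype.card_pos_iff.2 ⟨k⟩).ne'
  linarith [(mul_eq_zero.1 hzero).resolve_left hcard]

end ProdEqOne

theorem exists_four_lt_orderOf_units {K : Type*} [Field K] [Fintype K] (hK : 5 < Fintype.card K) :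
    ∃ g : Kˣ, 4 < orderOf g := by
  classical
  obtain ⟨g, hg⟩ := IsCyclic.exists_generator (α := Kˣ)
  refine ⟨g, ?_⟩
  rw [orderOf_eq_card_of_forall_mem_zpowers hg, Nat.card_eq_fintype_card, Fintype.card_units]
  omega

section Roots

variable {ι : Type*} [DecidableEq ι]

def rootExponent : Option {p : ι × ι // p.1 ≠ p.2} → ι → ℤ
  | none => 0
  | some p => Pi.single p.1.1 1 - Pi.single p.1.2 1

theorem abs_rootExponent_le (s : Option {p : ι × ι // p.1 ≠ p.2}) (i : ι) :
    |rootExponent s i| ≤ 1 := by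
  rcases s with _ | ⟨⟨a, b⟩, hab⟩
  · simp [rootExponent]
  · simp only [rootExponent, Pi.sub_apply, Pi.single_apply]
    split_ifs <;> simp_all

theorem sum_rootExponent [Fintype ι] (s : Option {p : ι × ι // p.1 ≠ p.2}) :
    ∑ i, rootExponent s i = 0 := by
  rcases s with _ | p
  · simp [rootExponent]
  · simp [rootExponent, sum_sub_distrib]

theorem rootExponent_injective : Function.Injective (rootExponent (ι := ι)) := by
  rintro (_ | ⟨⟨a, b⟩, hab⟩) (_ | ⟨⟨a', b'⟩, hab'⟩) h
  · rfl
  · simpa [rootExponent, hab'.symm] using congrFun h a'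
  · simpa [rootExponent, hab.symm] using congrFun h a
  · have ha := congrFun h a
    have hb := congrFun h b
    simp only [rootExponent, Pi.sub_apply, Pi.single_apply] at ha hb
    have : a = a' ∧ b = b' := by split_ifs at ha hb <;> simp_all
    simp [this]

variable [Fintype ι]

theorem zpowProdHom_rootExponent {G : Type*} [CommGroup G] (s : Option {p : ι × ι // p.1 ≠ p.2})
    (t : ι → G) : zpowProdHom (rootExponent s) t = s.elim 1 fun p => t p.1.1 / t p.1.2 := by
  rcases s with _ | p
  · simp [rootExponent, zpowProdHom_apply]
  · simp [rootExponent, zpowProdHom_sub, zpowProdHom_single]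

variable (ι) in
def rootCharacter (K : Type*) [Field K] (s : Option {p : ι × ι // p.1 ≠ p.2}) :
    prodEqOneSubgroup ι Kˣ →* K :=
  (Units.coeHom K).comp ((zpowProdHom (rootExponent s)).comp (prodEqOneSubgroup ι Kˣ).subtype)

theorem rootCharacter_apply {K : Type*} [Field K] (s : Option {p : ι × ι // p.1 ≠ p.2})
    (t : prodEqOneSubgroup ι Kˣ) :
    rootCharacter ι K s t = s.elim 1 fun p => (t.1 p.1.1 : K) * (t.1 p.1.2 : K)⁻¹ := by
  rcases s with _ | p <;> simp [rootCharacter, zpowProdHom_rootExponent, div_eq_mul_inv]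

theorem rootCharacter_injective {K : Type*} [Field K] [Fintype K] (hK : 5 < Fintype.card K) :
    Function.Injective (rootCharacter ι K) := by
  intro s s' h
  obtain ⟨g, hg⟩ := exists_four_lt_orderOf_units hK
  refine rootExponent_injective (eq_of_zpowProdHom_eqOn_prodEqOneSubgroup hg
    (abs_rootExponent_le s) (abs_rootExponent_le s') (by rw [sum_rootExponent, sum_rootExponent])
    fun t ht => Units.ext ?_)
  exact DFunLike.congr_fun h ⟨t, ht⟩

end Roots

theorem root_values_span_top
    (q n : ℕ) (hq : 5 < q)
    (Fq : Type) [Field Fq] [Fintype Fq] (hcard : Fintype.card Fq = q) :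
    Submodule.span Fq
      {v : Option {p : Fin n × Fin n // p.1 ≠ p.2} → Fq |
        ∃ t : Fin n → Fqˣ, (∏ i, t i) = 1 ∧
          v = fun s => Option.elim s 1 (fun p => (t p.1.1 : Fq) * ((t p.1.2 : Fq))⁻¹)} = ⊤ := by
  convert span_range_eval_eq_top_of_injective (rootCharacter_injective (ι := Fin n) (hcard ▸ hq))
    using 2
  ext v
  simp only [Set.mem_ofPred_eq, Set.mem_range, rootCharacter_apply, Subtype.exists,
    mem_prodEqOneSubgroup, exists_prop, eq_comm (a := v)]
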